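/- arXiv:2402.11761 — 4 statements merged into one kernel-verified Lean document; each statement's English description precedes it below -/
import Mathlib

section
/- Let F be a number field of degree n over ℚ and J a nonzero ideal of 𝒪_F with absolute norm N = N_{F/ℚ}(J). Then ∏_{𝔭} (1 + v_𝔭(J)) ≤ d(N)^n, where the product is over all nonzero prime ideals 𝔭 of 𝒪_F, v_𝔭(J) is the exponent of 𝔭 in the factorization of J, and d(N) is the number of positive divisors of N. -/
/-!
Every prime `𝔭 ∣ J` lies over a rational prime `p = N(𝔭 ∩ ℤ)`, which divides `N(𝔭)`; since
`𝔭 ^ v_𝔭(J) ∣ J`, taking norms gives `v_𝔭(J) ≤ v_p(N)`. Distinct primes over `p` all divide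
`(p)`, whose norm is `p ^ n`, and each has norm at least `p`, so there are at most `n` of them.
Grouping the factors `1 + v_𝔭(J)` by `p` therefore bounds the product by
`∏_{p ∣ N} (1 + v_p(N)) ^ n = d(N) ^ n`.
-/

open NumberField UniqueFactorizationMonoid Finset

theorem Finset.prod_le_prod_pow_of_card_fiber_le {ι κ M : Type*} [DecidableEq κ] [CommMonoid M]
    [PartialOrder M] [IsOrderedMonoid M] {s : Finset ι} {t : Finset κ} {f : ι → κ}
    (hf : ∀ i ∈ s, f i ∈ t) {g : ι → M} {h : κ → M} (hg : ∀ i ∈ s, g i ≤ h (f i))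
    (hh : ∀ k ∈ t, 1 ≤ h k) {n : ℕ} (hn : ∀ k ∈ t, #{i ∈ s | f i = k} ≤ n) :
    ∏ i ∈ s, g i ≤ ∏ k ∈ t, h k ^ n :=
  calc ∏ i ∈ s, g i ≤ ∏ i ∈ s, h (f i) := prod_le_prod' hg
    _ = ∏ k ∈ t, ∏ i ∈ s with f i = k, h (f i) := (prod_fiberwise_of_maps_to hf _).symm
    _ = ∏ k ∈ t, h k ^ #{i ∈ s | f i = k} :=
        prod_congr rfl fun k _ => prod_eq_pow_card fun i hi => by rw [(mem_filter.mp hi).2]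
    _ ≤ ∏ k ∈ t, h k ^ n := prod_le_prod' fun k hk => pow_le_pow_right' (hh k hk) (hn k hk)

namespace Ideal

theorem absNorm_under_prime_of_mem_normalizedFactors {S : Type*} [CommRing S] [IsDedekindDomain S]
    [Algebra.IsIntegral ℤ S] {I P : Ideal S} (hP : P ∈ normalizedFactors I) :
    (absNorm (P.under ℤ)).Prime := by
  have hPprime := prime_of_normalized_factor P hP
  have : P.IsPrime := isPrime_of_prime hPprime
  have : NeZero P := ⟨hPprime.ne_zero⟩
  exact Nat.absNorm_under_prime P

variable {S : Type*} [CommRing S] [IsDedekindDomain S] [Module.Free ℤ S]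

theorem absNorm_under_pow_count_normalizedFactors_dvd {I P : Ideal S} (hI : I ≠ ⊥)
    (hP : P ∈ normalizedFactors I) :
    absNorm (P.under ℤ) ^ (normalizedFactors I).count P ∣ absNorm I := by
  have hPI : P ^ (normalizedFactors I).count P ∣ I := by
    have := pow_multiplicity_dvd P I
    rwa [multiplicity_eq_count_normalizedFactors (irreducible_of_normalized_factor P hP) hI,
      normalize_eq] at this
  calc absNorm (P.under ℤ) ^ (normalizedFactors I).count P
      ∣ absNorm P ^ (normalizedFactors I).count P :=
        pow_dvd_pow_of_dvd (Int.absNorm_under_dvd_absNorm P) _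
    _ = absNorm (P ^ (normalizedFactors I).count P) := (map_pow absNorm P _).symm
    _ ∣ absNorm I := map_dvd absNorm hPI

theorem count_normalizedFactors_le_factorization_absNorm [Module.Finite ℤ S] {I P : Ideal S}
    (hI : I ≠ ⊥) (hP : P ∈ normalizedFactors I) :
    (normalizedFactors I).count P ≤ (absNorm I).factorization (absNorm (P.under ℤ)) :=
  ((absNorm_under_prime_of_mem_normalizedFactors hP).pow_dvd_iff_le_factorization
    (absNorm_eq_zero_iff.not.mpr hI)).mp (absNorm_under_pow_count_normalizedFactors_dvd hI hP)

theorem card_le_finrank_of_absNorm_under_eq [Module.Finite ℤ S] {T : Finset (Ideal S)}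
    (hT : ∀ P ∈ T, Prime P) {q : ℕ} (hq : q.Prime) (hTq : ∀ P ∈ T, absNorm (P.under ℤ) = q) :
    #T ≤ Module.finrank ℤ S := by
  have hprod : ∏ P ∈ T, P ∣ span {(q : S)} :=
    prod_primes_dvd _ hT fun P hP => by
      rw [dvd_iff_le, span_singleton_le_iff_mem, ← hTq P hP]
      exact Int.absNorm_under_mem P
  have hle : q ^ #T ≤ q ^ Module.finrank ℤ S :=
    calc q ^ #T ≤ ∏ P ∈ T, absNorm P :=
          pow_card_le_prod _ _ _ fun P hP => Nat.le_of_dvd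
            (Nat.pos_of_ne_zero (absNorm_eq_zero_iff.not.mpr (hT P hP).ne_zero))
            (hTq P hP ▸ Int.absNorm_under_dvd_absNorm P)
      _ ≤ q ^ Module.finrank ℤ S := by
          refine Nat.le_of_dvd (pow_pos hq.pos _) ?_
          rw [← absNorm_span_natCast, ← map_prod]
          exact map_dvd absNorm hprod
  exact (Nat.pow_le_pow_iff_right hq.one_lt).mp hle

end Ideal

open scoped Classical in
theorem prod_one_add_valuation_le_divisors_pow (F : Type*) [Field F] [NumberField F]
    (J : Ideal (𝓞 F)) (hJ : J ≠ 0) :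
    ((normalizedFactors J).toFinset.prod fun P => 1 + (normalizedFactors J).count P)
      ≤ (Nat.divisors (Ideal.absNorm J)).card ^ (Module.finrank ℚ F) := by
  have hN : Ideal.absNorm J ≠ 0 := Ideal.absNorm_eq_zero_iff.not.mpr hJ
  rw [Nat.card_divisors hN, ← RingOfIntegers.rank, ← prod_pow]
  refine prod_le_prod_pow_of_card_fiber_le (f := fun P => Ideal.absNorm (P.under ℤ))
    (fun P hP => ?_) (fun P hP => ?_) (fun _ _ => Nat.le_add_left 1 _) (fun q hq => ?_)
  · rw [Multiset.mem_toFinset] at hP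
    exact Nat.mem_primeFactors.mpr ⟨Ideal.absNorm_under_prime_of_mem_normalizedFactors hP,
      (Int.absNorm_under_dvd_absNorm P).trans
        (map_dvd Ideal.absNorm (dvd_of_mem_normalizedFactors hP)), hN⟩
  · rw [Multiset.mem_toFinset] at hP
    have := Ideal.count_normalizedFactors_le_factorization_absNorm hJ hP
    omega
  · refine Ideal.card_le_finrank_of_absNorm_under_eq (fun P hP => ?_)
      (Nat.prime_of_mem_primeFactors hq) fun P hP => (mem_filter.mp hP).2
    exact prime_of_normalized_factor P (Multiset.mem_toFinset.mp (mem_filter.mp hP).1)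
end

section
/- Let K be a non-archimedean local field with ring of integers 𝒪, uniformizer ϖ, and residue field of size q, and let |·| be the normalized absolute value with |ϖ| = q^{-1}. Let α ∈ 𝒪^× with α − 1 ∈ 𝒪^×. If κ = [[a,b],[c,d]] ∈ GL₂(𝒪) and x ∈ K satisfy κ^{-1}·[[1,−x],[0,1]]·[[α,0],[0,1]]·[[1,x],[0,1]]·κ ∈ GL₂(𝒪), then x ∈ 𝒪. -/
/-!
The conjugating unipotents turn `diag(α, 1)` into `N = !![α, (α - 1) x; 0, 1]`, so the hypothesis
says `κ⁻¹ N κ` is integral; multiplying by the integral `κ`, so is `N κ`. Its top row gives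
`(α - 1) x κ₁ⱼ ∈ 𝒪` for both `j`. Since `det κ` is a unit, some `κ₁ⱼ` is a unit (reduce modulo
the maximal ideal), and `α - 1` is a unit, hence `x ∈ 𝒪`.
-/

theorem IsLocalRing.exists_isUnit_of_isUnit_det {n R : Type*} [Fintype n] [DecidableEq n]
    [CommRing R] [IsLocalRing R] {A : Matrix n n R} (hA : IsUnit A.det) (i : n) :
    ∃ j, IsUnit (A i j) := by
  by_contra! hrow
  have hres : ((residue R).mapMatrix A).det = 0 :=
    Matrix.det_eq_zero_of_row_eq_zero i fun j => (residue_eq_zero_iff _).mpr (hrow j)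
  rw [← RingHom.map_det] at hres
  exact (hA.map _).ne_zero hres

theorem RingHom.mem_range_of_isUnit_mul {R S : Type*} [Ring R] [Ring S] (f : R →+* S)
    {u : R} (hu : IsUnit u) {y : S} (hy : f u * y ∈ f.range) : y ∈ f.range := by
  obtain ⟨v, rfl⟩ := hu
  simpa [← mul_assoc, ← map_mul] using mul_mem (f.mem_range_self ↑v⁻¹) hy

theorem Matrix.unipotent_conj_diagonal_fin_two {K : Type*} [CommRing K] (a x : K) :
    !![1, -x; 0, 1] * !![a, 0; 0, 1] * !![1, x; 0, 1] = !![a, (a - 1) * x; 0, 1] := by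
  ext i j
  fin_cases i <;> fin_cases j <;> simp [Matrix.mul_apply, sub_mul]
  ring

theorem hyperbolic_orbital_integral_support_general (R : Type*) [CommRing R] [IsDomain R]
    [IsDiscreteValuationRing R]
    (K : Type*) [Field K] [Algebra R K]
    (α : Rˣ) (hα : IsUnit ((α : R) - 1))
    (κ : Matrix (Fin 2) (Fin 2) R) (hκ : IsUnit κ.det)
    (x : K)
    (h : ∀ i j, ((κ.map (algebraMap R K))⁻¹ *
          !![1, -x; 0, 1] * !![algebraMap R K (α : R), 0; 0, 1] * !![1, x; 0, 1] *
          κ.map (algebraMap R K)) i j ∈ (algebraMap R K).range) :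
    x ∈ (algebraMap R K).range := by
  set f := algebraMap R K
  set κ' := κ.map f
  have hκ'S : κ' ∈ f.range.matrix := fun i j => f.mem_range_self (κ i j)
  have hκ'inv : κ' * κ'⁻¹ = 1 :=
    κ'.mul_nonsing_inv (by simpa [κ', RingHom.map_det] using hκ.map f)
  have hconj : !![f α, (f α - 1) * x; 0, 1] * κ' ∈ f.range.matrix := by
    convert mul_mem hκ'S h using 1
    rw [← Matrix.unipotent_conj_diagonal_fin_two]
    simp only [← mul_assoc, hκ'inv, one_mul]
  have hrow : ∀ j, f ((α - 1) * κ 1 j) * x ∈ f.range := fun j => by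
    convert f.range.sub_mem (hconj 0 j) (f.range.mul_mem (f.mem_range_self α) (hκ'S 0 j)) using 1
    simp only [κ', map_mul, map_sub, map_one, Matrix.mul_apply, Matrix.of_apply, Matrix.cons_val',
      Matrix.cons_val_fin_one, Matrix.cons_val_zero, Matrix.map_apply, Fin.sum_univ_two,
      Matrix.cons_val_one, add_sub_cancel_left]
    exact mul_right_comm _ _ _
  obtain ⟨j, hj⟩ := IsLocalRing.exists_isUnit_of_isUnit_det hκ 1
  exact f.mem_range_of_isUnit_mul (hα.mul hj) (hrow j)

theorem hyperbolic_orbital_integral_support (R : Type*) [CommRing R] [IsDomain R]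
    [IsDiscreteValuationRing R]
    (K : Type*) [Field K] [Algebra R K] [IsFractionRing R K]
    (α : Rˣ) (hα : IsUnit ((α : R) - 1))
    (κ : Matrix (Fin 2) (Fin 2) R) (hκ : IsUnit κ.det)
    (x : K)
    (h : ∀ i j, ((κ.map (algebraMap R K))⁻¹ *
          !![1, -x; 0, 1] * !![algebraMap R K (α : R), 0; 0, 1] * !![1, x; 0, 1] *
          κ.map (algebraMap R K)) i j ∈ (algebraMap R K).range) :
    x ∈ (algebraMap R K).range :=
  hyperbolic_orbital_integral_support_general R K α hα κ hκ x h
end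

section
/- Let K be a non-archimedean local field with ring of integers 𝒪, uniformizer ϖ, and let e ≥ 0 be an integer. Let κ = [[a,b],[c,d]] ∈ GL₂(𝒪) and y ∈ K^×. Then the matrix κ^{-1}·[[1,y],[0,1]]·κ lies in Z(K)·K_e, where Z(K) is the group of nonzero scalar matrices and K_e = {[[a,b],[c,d]] ∈ GL₂(𝒪) : ϖ^e ∣ c}, if and only if y ∈ 𝒪 and c²y ∈ ϖ^e𝒪. -/
/-!
Write `κ = !![a, b; c, d]`. Then `det κ • κ⁻¹ * !![1, y; 0, 1] * κ` is
`!![det κ + c d y, d² y; -(c² y), det κ - c d y]`. If the conjugate equals `z • A` with `A ∈ K_e`,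
taking determinants gives `z² det A = 1`, so `z` is integral over `𝒪`, hence in `𝒪`; the
off-diagonal entries then put `d² y` in `𝒪` and `c² y` in `ϖ^e 𝒪`, and as `𝒪` is local one of
`c, d` is a unit, whence `y ∈ 𝒪`. Conversely, for `y ∈ 𝒪` the conjugate itself lies in `K_e`: it
has determinant `1` and lower-left entry `-c² y / det κ`.
-/

open Matrix IsLocalization

namespace Matrix

variable {S T : Type*} [CommRing S] [CommRing T]

theorem det_smul_inv_mul_unipotent_mul_fin_two {κ : Matrix (Fin 2) (Fin 2) S}
    (hκ : IsUnit κ.det) (y : S) :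
    κ.det • (κ⁻¹ * !![1, y; 0, 1] * κ) =
      !![κ.det + κ 1 0 * κ 1 1 * y, κ 1 1 ^ 2 * y;
        -(κ 1 0 ^ 2 * y), κ.det - κ 1 0 * κ 1 1 * y] := by
  rw [inv_def, smul_mul, smul_mul, smul_smul, Ring.mul_inverse_cancel _ hκ, one_smul,
    adjugate_fin_two, det_fin_two]
  ext i j
  fin_cases i <;> fin_cases j <;> simp [mul_apply, Fin.sum_univ_two] <;> ring

theorem isUnit_or_isUnit_of_isUnit_det_fin_two [IsLocalRing S] {κ : Matrix (Fin 2) (Fin 2) S}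
    (hκ : IsUnit κ.det) : IsUnit (κ 1 0) ∨ IsUnit (κ 1 1) := by
  rw [det_fin_two, sub_eq_add_neg] at hκ
  rcases IsLocalRing.isUnit_or_isUnit_of_isUnit_add hκ with h | h
  · exact .inr (isUnit_of_mul_isUnit_right h)
  · exact .inl (isUnit_of_mul_isUnit_right (IsUnit.neg_iff _ |>.mp h))

theorem det_map_ringHom {n : Type*} [Fintype n] [DecidableEq n] (f : S →+* T)
    (κ : Matrix n n S) : (κ.map f).det = f κ.det := by
  rw [RingHom.map_det, RingHom.mapMatrix_apply]

theorem isUnit_det_map {n : Type*} [Fintype n] [DecidableEq n] (f : S →+* T)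
    {κ : Matrix n n S} (hκ : IsUnit κ.det) : IsUnit (κ.map f).det := by
  rw [det_map_ringHom]
  exact hκ.map f

theorem map_nonsing_inv_ringHom {n : Type*} [Fintype n] [DecidableEq n] (f : S →+* T)
    {κ : Matrix n n S} (hκ : IsUnit κ.det) : (κ⁻¹).map f = (κ.map f)⁻¹ := by
  refine (inv_eq_left_inv ?_).symm
  rw [← Matrix.map_mul, nonsing_inv_mul _ hκ, Matrix.map_one _ f.map_zero f.map_one]

theorem map_unipotent_fin_two (f : S →+* T) (r : S) :
    (!![1, r; 0, 1] : Matrix (Fin 2) (Fin 2) S).map f = !![1, f r; 0, 1] := by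
  ext i j
  fin_cases i <;> fin_cases j <;> simp

end Matrix

section

variable {R K : Type*} [CommRing R]

theorem IsLocalization.isInteger_of_isUnit_pow_mul [CommRing K] [Algebra R K] {u : R}
    (hu : IsUnit u) (n : ℕ) {y : K} (h : IsInteger R (algebraMap R K u ^ n * y)) : IsInteger R y := by
  obtain ⟨v, hv⟩ := hu.exists_left_inv
  convert isInteger_smul (a := v ^ n) h using 1
  rw [Algebra.smul_def, ← mul_assoc, ← map_pow, ← map_mul, ← mul_pow, hv, one_pow, map_one,
    one_mul]

theorem sq_mul_eq_of_inv_mul_unipotent_mul_eq_smul [CommRing K] [Algebra R K]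
    {κ A : Matrix (Fin 2) (Fin 2) R} (hκ : IsUnit κ.det) {y : K} {w : R}
    (h : (κ.map (algebraMap R K))⁻¹ * !![1, y; 0, 1] * κ.map (algebraMap R K)
      = algebraMap R K w • A.map (algebraMap R K)) :
    algebraMap R K (κ 1 1) ^ 2 * y = algebraMap R K (κ.det * w * A 0 1) ∧
      algebraMap R K (κ 1 0) ^ 2 * y = algebraMap R K (-(κ.det * w * A 1 0)) := by
  have hconj := det_smul_inv_mul_unipotent_mul_fin_two (isUnit_det_map (algebraMap R K) hκ) y
  rw [h, det_map_ringHom] at hconj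
  have h01 := congrFun₂ hconj 0 1
  have h10 := congrFun₂ hconj 1 0
  simp only [Matrix.smul_apply, smul_eq_mul, map_apply, of_apply, cons_val', cons_val_zero,
    cons_val_one, empty_val', cons_val_fin_one] at h01 h10
  simp only [map_mul, map_neg]
  exact ⟨by linear_combination -h01, by linear_combination h10⟩

theorem isInteger_of_inv_mul_unipotent_mul_eq_smul [IsIntegrallyClosed R] [Field K]
    [Algebra R K] [IsFractionRing R K]
    {κ A : Matrix (Fin 2) (Fin 2) R} (hκ : IsUnit κ.det) (hA : IsUnit A.det) {y z : K}
    (h : (κ.map (algebraMap R K))⁻¹ * !![1, y; 0, 1] * κ.map (algebraMap R K)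
      = z • A.map (algebraMap R K)) : IsInteger R z := by
  have hdet : z ^ 2 * algebraMap R K A.det = 1 := by
    have := congrArg det h
    rw [det_conj' ?_, det_fin_two_of, det_smul, det_map_ringHom, Fintype.card_fin] at this
    · simpa using this.symm
    · exact (isUnit_iff_isUnit_det _).mpr (isUnit_det_map _ hκ)
  refine IsIntegrallyClosed.exists_algebraMap_eq_of_isIntegral_pow two_pos ?_
  rw [left_inv_eq_right_inv hdet (by rw [← map_mul, hA.mul_val_inv, map_one] :
    algebraMap R K A.det * algebraMap R K ↑hA.unit⁻¹ = 1)]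
  exact isIntegral_algebraMap

end

theorem unipotent_conjugate_mem_ZKe_iff_general (R : Type*) [CommRing R] [IsDomain R]
    [IsDiscreteValuationRing R]
    (K : Type*) [Field K] [Algebra R K] [IsFractionRing R K]
    (ϖ : R) (e : ℕ)
    (κ : Matrix (Fin 2) (Fin 2) R) (hκ : IsUnit κ.det)
    (y : K) :
    (∃ z : K, z ≠ 0 ∧ ∃ A : Matrix (Fin 2) (Fin 2) R, IsUnit A.det ∧ ϖ ^ e ∣ A 1 0 ∧
        (κ.map (algebraMap R K))⁻¹ * !![1, y; 0, 1] * κ.map (algebraMap R K)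
          = z • A.map (algebraMap R K)) ↔
      ((∃ r : R, algebraMap R K r = y) ∧
        ∃ r : R, algebraMap R K (ϖ ^ e * r) = (algebraMap R K (κ 1 0)) ^ 2 * y) := by
  constructor
  · rintro ⟨z, -, A, hA, ⟨t, ht⟩, h⟩
    obtain ⟨w, rfl⟩ := isInteger_of_inv_mul_unipotent_mul_eq_smul hκ hA h
    obtain ⟨hd, hc⟩ := sq_mul_eq_of_inv_mul_unipotent_mul_eq_smul hκ h
    refine ⟨?_, -(κ.det * w * t), by rw [hc, ht]; congr 1; ring⟩
    rcases isUnit_or_isUnit_of_isUnit_det_fin_two hκ with hcu | hdu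
    · exact isInteger_of_isUnit_pow_mul hcu 2 ⟨_, hc.symm⟩
    · exact isInteger_of_isUnit_pow_mul hdu 2 ⟨_, hd.symm⟩
  · rintro ⟨⟨r, rfl⟩, s, hs⟩
    have hsr : ϖ ^ e * s = κ 1 0 ^ 2 * r :=
      IsFractionRing.injective R K (by rw [hs, map_mul, map_pow])
    have hκu : IsUnit κ := (isUnit_iff_isUnit_det κ).mpr hκ
    refine ⟨1, one_ne_zero, κ⁻¹ * !![1, r; 0, 1] * κ, ?_, ?_, ?_⟩
    · simp [det_conj' hκu]
    · rw [← hκ.dvd_mul_left]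
      refine ⟨-s, ?_⟩
      have := congrFun₂ (det_smul_inv_mul_unipotent_mul_fin_two hκ r) 1 0
      simp only [Matrix.smul_apply, smul_eq_mul, of_apply, cons_val', cons_val_zero,
        cons_val_fin_one, cons_val_one] at this
      linear_combination this + hsr
    · rw [one_smul, Matrix.map_mul, Matrix.map_mul, map_nonsing_inv_ringHom _ hκ,
        map_unipotent_fin_two]

theorem unipotent_conjugate_mem_ZKe_iff (R : Type*) [CommRing R] [IsDomain R]
    [IsDiscreteValuationRing R]
    (K : Type*) [Field K] [Algebra R K] [IsFractionRing R K]
    (ϖ : R) (hϖ : Irreducible ϖ) (e : ℕ)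
    (κ : Matrix (Fin 2) (Fin 2) R) (hκ : IsUnit κ.det)
    (y : K) (hy : y ≠ 0) :
    (∃ z : K, z ≠ 0 ∧ ∃ A : Matrix (Fin 2) (Fin 2) R, IsUnit A.det ∧ ϖ ^ e ∣ A 1 0 ∧
        (κ.map (algebraMap R K))⁻¹ * !![1, y; 0, 1] * κ.map (algebraMap R K)
          = z • A.map (algebraMap R K)) ↔
      ((∃ r : R, algebraMap R K r = y) ∧
        ∃ r : R, algebraMap R K (ϖ ^ e * r) = (algebraMap R K (κ 1 0)) ^ 2 * y) :=
  unipotent_conjugate_mem_ZKe_iff_general R K ϖ e κ hκ y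
end

section
/- Let 𝒪 be the ring of integers of a non-archimedean local field with uniformizer ϖ, residue field of size q and odd residue characteristic. Let m ∈ 𝒪, u ∈ 𝒪^×, set f := v(m² − 4u) (the ϖ-adic valuation, possibly 0). Then for every integer α ≥ 1, the number of solutions t ∈ 𝒪/ϖ^α𝒪 of t² − mt + u = 0 is at most 4·q^{f/2}. -/
/-!
Since `2` is a unit, `t ↦ 2t - m` identifies the roots with the square roots of
`Δ = m² - 4u = ϖ^f w` modulo `ϖ^α`. If `a² ≡ b² ≡ Δ`, then `ϖ^α ∣ (a - b)(a + b)`, and when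
`v(2a) ≤ k` the factors `a - b` and `a + b` cannot both be divisible by `ϖ^(k+1)`; hence
`b ≡ ±a (mod ϖ^(α-k))`. For `α > f` take `k = v(a) = f/2`, for `α ≤ f` take `k = ⌊α/2⌋`. So the
square roots lie in two cosets of the kernel of `R ⧸ ϖ^α → R ⧸ ϖ^(α-k)`, which has `q^k` elements.
-/

open Ideal

noncomputable def quadraticRootsEquivSqrts {S : Type*} [CommRing S] (h2 : IsUnit (2 : S))
    (m u : S) :
    {t : S // t ^ 2 - m * t + u = 0} ≃ {y : S // y ^ 2 = m ^ 2 - 4 * u} :=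
  (h2.unit.mulLeft.trans (Equiv.subRight m)).subtypeEquiv fun t => by
    rw [← sub_eq_zero (b := m ^ 2 - 4 * u), Equiv.trans_apply, Units.mulLeft_apply,
      Equiv.subRight_apply, IsUnit.unit_spec,
      show (2 * t - m) ^ 2 - (m ^ 2 - 4 * u) = 2 * 2 * (t ^ 2 - m * t + u) by ring,
      (h2.mul h2).mul_right_eq_zero]

theorem AddSubgroup.ncard_le_two_mul_card_of_sub_mem_or_add_mem {G : Type*} [AddGroup G]
    [Finite G] (K : AddSubgroup G) {s : Set G} (g : G) (h : ∀ x ∈ s, x - g ∈ K ∨ x + g ∈ K) :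
    s.ncard ≤ 2 * Nat.card K := by
  have hs : s ⊆ (· + g) '' K ∪ (· - g) '' K := fun x hx => by
    rcases h x hx with hx | hx
    · exact Or.inl ⟨x - g, hx, sub_add_cancel x g⟩
    · exact Or.inr ⟨x + g, hx, add_sub_cancel_right x g⟩
  calc s.ncard ≤ ((· + g) '' K ∪ (· - g) '' K).ncard := Set.ncard_le_ncard hs
    _ ≤ ((· + g) '' K).ncard + ((· - g) '' K).ncard := Set.ncard_union_le _ _
    _ ≤ (K : Set G).ncard + (K : Set G).ncard := add_le_add Set.ncard_image_le Set.ncard_image_le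
    _ = 2 * Nat.card K := by rw [← Nat.card_coe_set_eq, two_mul]; rfl

theorem AddMonoidHom.card_ker_mul_card_of_surjective {G H : Type*} [AddGroup G] [AddGroup H]
    (φ : G →+ H) (hφ : Function.Surjective φ) : Nat.card φ.ker * Nat.card H = Nat.card G := by
  rw [← φ.ker.card_mul_index, AddSubgroup.index_ker, AddMonoidHom.range_eq_top.mpr hφ,
    AddSubgroup.card_top]

theorem Irreducible.pow_dvd_unit_mul_pow_iff {M : Type*} [CommMonoidWithZero M]
    [IsCancelMulZero M] {p : M} (hp : Irreducible p) (v : Mˣ) (k n : ℕ) :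
    p ^ k ∣ v * p ^ n ↔ k ≤ n := by
  rw [Units.dvd_mul_left, pow_dvd_pow_iff hp.ne_zero hp.not_isUnit]

theorem Irreducible.two_mul_eq_of_pow_dvd_sq_sub {R : Type*} [CommRing R] [IsDomain R]
    {ϖ : R} (hϖ : Irreducible ϖ) {f α k : ℕ} (hfα : f < α) (v w : Rˣ)
    (h : ϖ ^ α ∣ (↑v * ϖ ^ k) ^ 2 - ϖ ^ f * ↑w) : 2 * k = f := by
  rw [show (↑v * ϖ ^ k) ^ 2 = ↑(v ^ 2) * ϖ ^ (2 * k) by push_cast; ring,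
    mul_comm (ϖ ^ f)] at h
  have hiff : ∀ n ≤ α, n ≤ 2 * k ↔ n ≤ f := fun n hn => by
    rw [← hϖ.pow_dvd_unit_mul_pow_iff (v ^ 2) n (2 * k), ← hϖ.pow_dvd_unit_mul_pow_iff w n f]
    exact dvd_iff_dvd_of_dvd_sub ((pow_dvd_pow ϖ hn).trans h)
  have := hiff f hfα.le
  have := hiff (f + 1) hfα
  omega

namespace IsDiscreteValuationRing

variable {R : Type*} [CommRing R] [IsDomain R] [IsDiscreteValuationRing R] {ϖ : R}

theorem card_quotient_span_pow (hϖ : Irreducible ϖ) (n : ℕ) :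
    Nat.card (R ⧸ span {ϖ ^ n}) = Nat.card (R ⧸ span {ϖ}) ^ n := by
  have : (span {ϖ}).IsPrime := (span_singleton_prime hϖ.ne_zero).mpr hϖ.prime
  rw [← span_singleton_pow, ← Submodule.cardQuot_apply, ← Submodule.cardQuot_apply,
    cardQuot_pow_of_prime (by simpa [span_singleton_eq_bot] using hϖ.ne_zero)]

theorem finite_quotient_span_pow (hϖ : Irreducible ϖ) [Finite (R ⧸ span {ϖ})] (n : ℕ) :
    Finite (R ⧸ span {ϖ ^ n}) :=
  Nat.finite_of_card_ne_zero <| by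
    rw [card_quotient_span_pow hϖ]
    exact pow_ne_zero n Nat.card_pos.ne'

theorem card_ker_factor_span_pow (hϖ : Irreducible ϖ) [Finite (R ⧸ span {ϖ})] {k n : ℕ}
    (hkn : k ≤ n) (hle : span {ϖ ^ n} ≤ span {ϖ ^ (n - k)}) :
    Nat.card (Ideal.Quotient.factor hle).toAddMonoidHom.ker = Nat.card (R ⧸ span {ϖ}) ^ k := by
  have hcard := (Ideal.Quotient.factor hle).toAddMonoidHom.card_ker_mul_card_of_surjective
    (Ideal.Quotient.factor_surjective hle)
  rw [card_quotient_span_pow hϖ, card_quotient_span_pow hϖ] at hcard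
  apply Nat.eq_of_mul_eq_mul_right (pow_pos (Nat.card_pos (α := R ⧸ span {ϖ})) (n - k))
  rw [hcard, ← pow_add, Nat.add_sub_cancel' hkn]

theorem pow_sub_dvd_or_pow_succ_dvd_of_pow_dvd_mul (hϖ : Irreducible ϖ) {x y : R} {n : ℕ}
    (k : ℕ) (h : ϖ ^ n ∣ x * y) : ϖ ^ (n - k) ∣ x ∨ ϖ ^ (k + 1) ∣ y := by
  rcases eq_or_ne x 0 with rfl | hx
  · simp
  rcases eq_or_ne y 0 with rfl | hy
  · simp
  obtain ⟨i, v, rfl⟩ := eq_unit_mul_pow_irreducible hx hϖ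
  obtain ⟨j, w, rfl⟩ := eq_unit_mul_pow_irreducible hy hϖ
  rw [show ↑v * ϖ ^ i * (↑w * ϖ ^ j) = ↑(v * w) * ϖ ^ (i + j) by push_cast; ring,
    hϖ.pow_dvd_unit_mul_pow_iff] at h
  simp only [hϖ.pow_dvd_unit_mul_pow_iff]
  omega

theorem pow_sub_dvd_sub_or_add_of_le (hϖ : Irreducible ϖ) {a b : R} {n k : ℕ}
    (hn : n ≤ 2 * k + 1) (h : ϖ ^ n ∣ a ^ 2 - b ^ 2) :
    ϖ ^ (n - k) ∣ a - b ∨ ϖ ^ (n - k) ∣ a + b := by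
  rw [show a ^ 2 - b ^ 2 = (a - b) * (a + b) by ring] at h
  exact (pow_sub_dvd_or_pow_succ_dvd_of_pow_dvd_mul hϖ k h).imp_right
    (dvd_trans (pow_dvd_pow ϖ (by omega)))

theorem pow_sub_dvd_sub_or_add_of_not_dvd (hϖ : Irreducible ϖ) {a b : R} {n k : ℕ}
    (ha : ¬ ϖ ^ (k + 1) ∣ 2 * a) (h : ϖ ^ n ∣ a ^ 2 - b ^ 2) :
    ϖ ^ (n - k) ∣ a - b ∨ ϖ ^ (n - k) ∣ a + b := by
  have h₁ := pow_sub_dvd_or_pow_succ_dvd_of_pow_dvd_mul hϖ k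
    (show ϖ ^ n ∣ (a - b) * (a + b) by rwa [mul_comm, ← sq_sub_sq])
  have h₂ := pow_sub_dvd_or_pow_succ_dvd_of_pow_dvd_mul hϖ k
    (show ϖ ^ n ∣ (a + b) * (a - b) by rwa [← sq_sub_sq])
  have h₃ : ϖ ^ (k + 1) ∣ a + b → ϖ ^ (k + 1) ∣ a - b → False := fun hp hm =>
    ha (by simpa [two_mul, add_add_sub_cancel] using dvd_add hp hm)
  tauto

theorem exists_pow_sub_dvd_sub_or_add (hϖ : Irreducible ϖ) (h2 : IsUnit (2 : R)) {a : R}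
    {f α : ℕ} (w : Rˣ) (ha : ϖ ^ α ∣ a ^ 2 - ϖ ^ f * w) :
    ∃ k ≤ α, 2 * k ≤ f ∧ ∀ b, ϖ ^ α ∣ b ^ 2 - ϖ ^ f * w →
      ϖ ^ (α - k) ∣ b - a ∨ ϖ ^ (α - k) ∣ b + a := by
  suffices ∃ k ≤ α, 2 * k ≤ f ∧ ∀ b, ϖ ^ α ∣ a ^ 2 - b ^ 2 →
      ϖ ^ (α - k) ∣ a - b ∨ ϖ ^ (α - k) ∣ a + b by
    obtain ⟨k, hkα, hkf, hk⟩ := this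
    refine ⟨k, hkα, hkf, fun b hb => ?_⟩
    rw [dvd_sub_comm, add_comm]
    exact hk b (by simpa using dvd_sub ha hb)
  by_cases hαf : α ≤ f
  · exact ⟨α / 2, by omega, by omega, fun b => pow_sub_dvd_sub_or_add_of_le hϖ (by omega)⟩
  have ha0 : a ≠ 0 := by
    rintro rfl
    rw [zero_pow two_ne_zero, zero_sub, dvd_neg, Units.dvd_mul_right,
      pow_dvd_pow_iff hϖ.ne_zero hϖ.not_isUnit] at ha
    omega
  obtain ⟨k, v, rfl⟩ := eq_unit_mul_pow_irreducible ha0 hϖ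
  have hk := hϖ.two_mul_eq_of_pow_dvd_sq_sub (by omega) v w ha
  refine ⟨k, by omega, hk.le, fun b => pow_sub_dvd_sub_or_add_of_not_dvd hϖ ?_⟩
  rw [← mul_assoc, ← h2.unit_spec, ← Units.val_mul, hϖ.pow_dvd_unit_mul_pow_iff]
  omega

theorem card_sq_eq_mk_le (hϖ : Irreducible ϖ) [Finite (R ⧸ span {ϖ})] (h2 : IsUnit (2 : R))
    {Δ : R} {f : ℕ} (hΔ : ∃ w : Rˣ, Δ = ϖ ^ f * w) (α : ℕ) :
    Nat.card {x : R ⧸ span {ϖ ^ α} // x ^ 2 = Ideal.Quotient.mk _ Δ} ≤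
      2 * Nat.card (R ⧸ span {ϖ}) ^ (f / 2) := by
  obtain ⟨w, rfl⟩ := hΔ
  have hmk : ∀ b : R, Ideal.Quotient.mk (span {ϖ ^ α}) b ^ 2 = Ideal.Quotient.mk _ (ϖ ^ f * w) ↔
      ϖ ^ α ∣ b ^ 2 - ϖ ^ f * w := fun b => by
    rw [← map_pow, Ideal.Quotient.mk_eq_mk_iff_sub_mem, mem_span_singleton]
  rcases isEmpty_or_nonempty {x : R ⧸ span {ϖ ^ α} // x ^ 2 = Ideal.Quotient.mk _ (ϖ ^ f * w)}
    with _ | ⟨⟨x₀, hx₀⟩⟩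
  · rw [Nat.card_of_isEmpty]
    exact Nat.zero_le _
  obtain ⟨a, rfl⟩ := Ideal.Quotient.mk_surjective x₀
  obtain ⟨k, hkα, hkf, hk⟩ := exists_pow_sub_dvd_sub_or_add hϖ h2 w ((hmk a).mp hx₀)
  have hle : span {ϖ ^ α} ≤ span {ϖ ^ (α - k)} :=
    span_singleton_le_span_singleton.mpr (pow_dvd_pow ϖ (α.sub_le k))
  let π := Ideal.Quotient.factor hle
  have hπ : ∀ b : R, π.toAddMonoidHom (Ideal.Quotient.mk _ b) = 0 ↔ ϖ ^ (α - k) ∣ b := fun b => by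
    rw [RingHom.toAddMonoidHom_eq_coe, AddMonoidHom.coe_coe, Ideal.Quotient.factor_mk,
      Ideal.Quotient.eq_zero_iff_dvd]
  have := finite_quotient_span_pow hϖ α
  calc Nat.card {x // x ^ 2 = Ideal.Quotient.mk _ (ϖ ^ f * w)}
      = {x | x ^ 2 = Ideal.Quotient.mk (span {ϖ ^ α}) (ϖ ^ f * w)}.ncard :=
        Nat.card_coe_set_eq _
    _ ≤ 2 * Nat.card π.toAddMonoidHom.ker :=
      AddSubgroup.ncard_le_two_mul_card_of_sub_mem_or_add_mem _ (Ideal.Quotient.mk _ a)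
        fun x hx => by
          obtain ⟨b, rfl⟩ := Ideal.Quotient.mk_surjective x
          rw [AddMonoidHom.mem_ker, AddMonoidHom.mem_ker, ← map_sub, ← map_add, hπ, hπ]
          exact hk b ((hmk b).mp hx)
    _ ≤ 2 * Nat.card (R ⧸ span {ϖ}) ^ (f / 2) := by
      rw [card_ker_factor_span_pow hϖ hkα hle]
      exact Nat.mul_le_mul_left 2 (Nat.pow_le_pow_right Nat.card_pos (by omega))

end IsDiscreteValuationRing

theorem card_quadratic_roots_mod_pow_le_general (R : Type*) [CommRing R] [IsDomain R]
    [IsDiscreteValuationRing R]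
    (ϖ : R) (hϖ : Irreducible ϖ)
    (hfin : Finite (R ⧸ Ideal.span {ϖ}))
    (h2 : IsUnit (2 : R))
    (m u : R)
    (f : ℕ) (hf : ∃ w : Rˣ, m ^ 2 - 4 * u = ϖ ^ f * (w : R))
    (α : ℕ) :
    (Nat.card {t : R ⧸ Ideal.span {ϖ ^ α} //
        t ^ 2 - (Ideal.Quotient.mk (Ideal.span {ϖ ^ α}) m) * t
          + Ideal.Quotient.mk (Ideal.span {ϖ ^ α}) u = 0} : ℝ)
      ≤ 4 * (Nat.card (R ⧸ Ideal.span {ϖ}) : ℝ) ^ ((f : ℝ) / 2) := by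
  set mk := Ideal.Quotient.mk (span {ϖ ^ α})
  set q := Nat.card (R ⧸ span {ϖ})
  have hq : (1 : ℝ) ≤ q := by exact_mod_cast Nat.card_pos
  have hroots : Nat.card {t // t ^ 2 - mk m * t + mk u = 0} ≤ 2 * q ^ (f / 2) := by
    have hdisc : mk m ^ 2 - 4 * mk u = mk (m ^ 2 - 4 * u) := by
      rw [map_sub, map_mul, map_pow, map_ofNat]
    rw [Nat.card_congr (quadraticRootsEquivSqrts (h2.map mk) _ _), hdisc]
    exact IsDiscreteValuationRing.card_sq_eq_mk_le hϖ h2 hf α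
  calc _ ≤ (2 * q ^ (f / 2) : ℝ) := by exact_mod_cast hroots
    _ ≤ 2 * q ^ ((f : ℝ) / 2) := by
      rw [← Real.rpow_natCast]
      gcongr
      exact Nat.cast_div_le
    _ ≤ 4 * q ^ ((f : ℝ) / 2) := by gcongr; norm_num

theorem card_quadratic_roots_mod_pow_le (R : Type*) [CommRing R] [IsDomain R]
    [IsDiscreteValuationRing R]
    (ϖ : R) (hϖ : Irreducible ϖ)
    (hfin : Finite (R ⧸ Ideal.span {ϖ}))
    (h2 : IsUnit (2 : R))
    (m u : R) (hu : IsUnit u)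
    (f : ℕ) (hf : ∃ w : Rˣ, m ^ 2 - 4 * u = ϖ ^ f * (w : R))
    (α : ℕ) (hα : 1 ≤ α) :
    (Nat.card {t : R ⧸ Ideal.span {ϖ ^ α} //
        t ^ 2 - (Ideal.Quotient.mk (Ideal.span {ϖ ^ α}) m) * t
          + Ideal.Quotient.mk (Ideal.span {ϖ ^ α}) u = 0} : ℝ)
      ≤ 4 * (Nat.card (R ⧸ Ideal.span {ϖ}) : ℝ) ^ ((f : ℝ) / 2) :=
  card_quadratic_roots_mod_pow_le_general R ϖ hϖ hfin h2 m u f hf α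
end
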